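/- Let T_1 and T_2 be vertex-disjoint trees with distinguished vertices v_1 ∈ V(T_1), v_2 ∈ V(T_2), let k ≥ 1, and let T be obtained from T_1 and k disjoint copies of T_2 by joining v_1 by an edge to the copy of v_2 in each copy of T_2. Then the characteristic polynomial satisfies φ(T) = φ(T_2)^{k-1} ( φ(T_1) φ(T_2) − k φ(T_1 − v_1) φ(T_2 − v_2) ). -/

import Mathlib

/-!
Write `A₁`, `A₂` for the adjacency matrices of `T₁`, `T₂`. The adjacency matrix of the joined
graph is the block matrix with diagonal blocks `A₁` and `1 ⊗ₖ A₂` (one copy of `A₂` per copy of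
`T₂`), coupled by the rank-one matrix `e_{v₁} wᵀ`, where `w` is the indicator of the copies of
`v₂`. Over the field of rational functions `xI - A₂` is invertible, and the Schur complement of
the block `1 ⊗ₖ (xI - A₂)` is `xI - A₁ - k [(xI - A₂)⁻¹]_{v₂v₂} e_{v₁} e_{v₁}ᵀ`. By Cramer's rule
that entry is `φ(T₂ - v₂) / φ(T₂)`, and a rank-one change of the `(v₁, v₁)` entry changes the
determinant by a multiple of the principal minor `φ(T₁ - v₁)`.
-/

open scoped Classical

/-- Characteristic polynomial of the adjacency matrix of a graph. -/
noncomputable def gCharpoly {V : Type*} [Fintype V] (G : SimpleGraph V) : Polynomial ℝ :=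
  letI := Classical.decEq V
  letI := Classical.decRel G.Adj
  (G.adjMatrix ℝ).charpoly

/-- Adjacency eigenvalues listed in non-increasing order (with multiplicity). -/
noncomputable def eigsDesc {V : Type*} [Fintype V] (G : SimpleGraph V) : List ℝ :=
  ((gCharpoly G).roots.sort (· ≤ ·)).reverse

/-- Number of adjacency eigenvalues in the open interval (-1, 1), with multiplicity. -/
noncomputable def numIn {V : Type*} [Fintype V] (G : SimpleGraph V) : ℕ :=
  ((gCharpoly G).roots.filter (fun x => -1 < x ∧ x < 1)).card

/-- Multiplicity of `lam` as an adjacency eigenvalue. -/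
noncomputable def multOf {V : Type*} [Fintype V] (G : SimpleGraph V) (lam : ℝ) : ℕ :=
  (gCharpoly G).roots.count lam

/-- Nullity: dimension of the kernel of the adjacency matrix. -/
noncomputable def gNullity {V : Type*} [Fintype V] (G : SimpleGraph V) : ℕ :=
  letI := Classical.decRel G.Adj
  Module.finrank ℝ (LinearMap.ker (G.adjMatrix ℝ).mulVecLin)

/-- The tree obtained from `T₁` and `k` disjoint copies of `T₂` by joining the
vertex `v₁` of `T₁` to the copy of `v₂` in each copy of `T₂`. -/
def joinCopies {V₁ V₂ : Type*} (T₁ : SimpleGraph V₁) (T₂ : SimpleGraph V₂)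
    (v₁ : V₁) (v₂ : V₂) (k : ℕ) : SimpleGraph (V₁ ⊕ (Fin k × V₂)) :=
  SimpleGraph.fromRel (fun x y =>
    match x, y with
    | Sum.inl a, Sum.inl b => T₁.Adj a b
    | Sum.inr p, Sum.inr q => p.1 = q.1 ∧ T₂.Adj p.2 q.2
    | Sum.inl a, Sum.inr p => a = v₁ ∧ p.2 = v₂
    | _, _ => False)

open Matrix
open scoped Kronecker Polynomial

section MatrixLemmas

variable {R : Type*} [CommRing R] {n : Type*} [Fintype n] [DecidableEq n]

theorem Matrix.det_updateRow_single_self (M : Matrix n n R) (v : n) :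
    (M.updateRow v (Pi.single v 1)).det =
      (M.submatrix (Subtype.val : {x | x ≠ v} → n) Subtype.val).det := by
  let e := Equiv.sumCompl (· = v)
  have hblock : (M.updateRow v (Pi.single v 1)).submatrix e e =
      fromBlocks 1 0 (of fun (i : {x // x ≠ v}) (_ : {x // x = v}) => M i v)
        (M.submatrix (Subtype.val : {x | x ≠ v} → n) Subtype.val) := by
    ext (i | i) (j | j)
    · simp [e, Subsingleton.elim i j, j.2]
    all_goals simp [e, updateRow_apply, i.2, j.2]
  rw [← det_submatrix_equiv_self e, hblock, det_fromBlocks_zero₁₂, det_one, one_mul]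
  rfl

theorem Matrix.det_sub_smul_vecMulVec_single (M : Matrix n n R) (v : n) (t : R) :
    (M - t • vecMulVec (Pi.single v 1) (Pi.single v 1)).det =
      M.det - t * (M.submatrix (Subtype.val : {x | x ≠ v} → n) Subtype.val).det := by
  have hrow : M - t • vecMulVec (Pi.single v 1) (Pi.single v 1) =
      M.updateRow v (M v + (-t) • Pi.single v 1) := by
    ext i j
    by_cases hi : i = v <;>
      simp [updateRow_apply, hi, vecMulVec_apply, Pi.single_apply, sub_eq_add_neg]
  rw [hrow, det_updateRow_add, det_updateRow_smul, updateRow_eq_self, det_updateRow_single_self]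
  ring

theorem Matrix.inv_apply_self {K : Type*} [Field K] (M : Matrix n n K) (v : n) :
    M⁻¹ v v = (M.submatrix (Subtype.val : {x | x ≠ v} → n) Subtype.val).det / M.det := by
  rw [inv_def, smul_apply, adjugate_apply, det_updateRow_single_self, smul_eq_mul,
    Ring.inverse_eq_inv', div_eq_inv_mul]

theorem Matrix.det_fromBlocks_neg_vecMulVec_single {m : Type*} [Fintype m] [DecidableEq m]
    (A : Matrix n n R) (D : Matrix m m R) [Invertible D] (v : n) (w : m → R) :
    (fromBlocks A (-vecMulVec (Pi.single v 1) w) (-vecMulVec w (Pi.single v 1)) D).det =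
      D.det * (A.det - (w ᵥ* ⅟D ⬝ᵥ w) *
        (A.submatrix (Subtype.val : {x | x ≠ v} → n) Subtype.val).det) := by
  rw [det_fromBlocks₂₂, Matrix.neg_mul, Matrix.neg_mul, Matrix.mul_neg, neg_neg, vecMulVec_mul,
    vecMulVec_mul_vecMulVec, vecMulVec_smul, det_sub_smul_vecMulVec_single]

theorem Matrix.vecMul_one_kronecker_dotProduct {ι : Type*} [Fintype ι] [DecidableEq ι]
    (N : Matrix n n R) (v : n) :
    (fun p : ι × n => (Pi.single v 1 : n → R) p.2) ᵥ* ((1 : Matrix ι ι R) ⊗ₖ N) ⬝ᵥ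
      (fun p : ι × n => (Pi.single v 1 : n → R) p.2) = Fintype.card ι * N v v := by
  simp [vecMul, dotProduct, Fintype.sum_prod_type, kroneckerMap_apply, one_apply, Pi.single_apply]

theorem Matrix.det_fromBlocks_one_kronecker {K : Type*} [Field K] {m ι : Type*} [Fintype m]
    [DecidableEq m] [Fintype ι] [DecidableEq ι] [Nonempty ι] (N₁ : Matrix m m K)
    (N₂ : Matrix n n K) (hN₂ : N₂.det ≠ 0) (v₁ : m) (v₂ : n) :
    (fromBlocks N₁ (-vecMulVec (Pi.single v₁ 1) fun p : ι × n => (Pi.single v₂ 1 : n → K) p.2)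
      (-vecMulVec (fun p : ι × n => (Pi.single v₂ 1 : n → K) p.2) (Pi.single v₁ 1))
      ((1 : Matrix ι ι K) ⊗ₖ N₂)).det =
      N₂.det ^ (Fintype.card ι - 1) * (N₁.det * N₂.det - Fintype.card ι *
        (N₁.submatrix (Subtype.val : {x | x ≠ v₁} → m) Subtype.val).det *
        (N₂.submatrix (Subtype.val : {x | x ≠ v₂} → n) Subtype.val).det) := by
  have hdet : ((1 : Matrix ι ι K) ⊗ₖ N₂).det = N₂.det ^ Fintype.card ι := by
    rw [det_kronecker, det_one, one_pow, one_mul]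
  have := invertibleOfIsUnitDet _ (hdet ▸ (pow_ne_zero _ hN₂).isUnit)
  rw [det_fromBlocks_neg_vecMulVec_single, invOf_eq_nonsing_inv, inv_kronecker, inv_one,
    vecMul_one_kronecker_dotProduct, inv_apply_self, hdet]
  obtain ⟨c, hc⟩ := Nat.exists_eq_add_one_of_ne_zero (Fintype.card_ne_zero (α := ι))
  rw [hc, Nat.add_sub_cancel]
  push_cast
  field_simp
  ring

theorem Matrix.charmatrix_submatrix {m : Type*} [Fintype m] [DecidableEq m] (M : Matrix n n R)
    {e : m → n} (he : Function.Injective e) :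
    charmatrix (M.submatrix e e) = (charmatrix M).submatrix e e := by
  ext i j : 1
  by_cases h : i = j
  · simp [h]
  · simp [charmatrix_apply_ne _ _ _ h, charmatrix_apply_ne _ _ _ (he.ne h)]

theorem Matrix.charmatrix_one_kronecker {ι : Type*} [Fintype ι] [DecidableEq ι]
    (M : Matrix n n R) :
    charmatrix ((1 : Matrix ι ι R) ⊗ₖ M) = (1 : Matrix ι ι R[X]) ⊗ₖ charmatrix M := by
  ext ⟨i, a⟩ ⟨j, b⟩ : 1
  by_cases hij : i = j <;> by_cases hab : a = b <;>
    simp [hij, hab]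

end MatrixLemmas

theorem SimpleGraph.adjMatrix_induce {V : Type*} (G : SimpleGraph V) [DecidableRel G.Adj]
    (s : Set V) [DecidableRel (G.induce s).Adj] (R : Type*) [Zero R] [One R] :
    (G.induce s).adjMatrix R = (G.adjMatrix R).submatrix (↑) (↑) := by
  ext i j
  simp [adjMatrix_apply]

theorem gCharpoly_eq_det_charmatrix {V : Type*} [Fintype V] [DecidableEq V] (G : SimpleGraph V)
    [DecidableRel G.Adj] : gCharpoly G = (charmatrix (G.adjMatrix ℝ)).det := by
  unfold gCharpoly charpoly
  congr!

theorem gCharpoly_induce {V : Type*} [Fintype V] [DecidableEq V] (G : SimpleGraph V)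
    [DecidableRel G.Adj] (s : Set V) [Fintype s] :
    gCharpoly (G.induce s) =
      ((charmatrix (G.adjMatrix ℝ)).submatrix (↑) (↑) : Matrix s s ℝ[X]).det := by
  rw [gCharpoly_eq_det_charmatrix, G.adjMatrix_induce, charmatrix_submatrix _ Subtype.val_injective]

section joinCopies

variable {V₁ V₂ : Type*} (T₁ : SimpleGraph V₁) (T₂ : SimpleGraph V₂) (v₁ : V₁) (v₂ : V₂) (k : ℕ)

theorem joinCopies_adj_inl_inl (a b : V₁) :
    (joinCopies T₁ T₂ v₁ v₂ k).Adj (.inl a) (.inl b) ↔ T₁.Adj a b := by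
  simp only [joinCopies, SimpleGraph.fromRel_adj, ne_eq, Sum.inl.injEq, T₁.adj_comm b a, or_self]
  exact ⟨And.right, fun h => ⟨h.ne, h⟩⟩

theorem joinCopies_adj_inl_inr (a : V₁) (p : Fin k × V₂) :
    (joinCopies T₁ T₂ v₁ v₂ k).Adj (.inl a) (.inr p) ↔ a = v₁ ∧ p.2 = v₂ := by
  simp [joinCopies]

theorem joinCopies_adj_inr_inl (p : Fin k × V₂) (a : V₁) :
    (joinCopies T₁ T₂ v₁ v₂ k).Adj (.inr p) (.inl a) ↔ a = v₁ ∧ p.2 = v₂ := by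
  simp [joinCopies]

theorem joinCopies_adj_inr_inr (p q : Fin k × V₂) :
    (joinCopies T₁ T₂ v₁ v₂ k).Adj (.inr p) (.inr q) ↔ p.1 = q.1 ∧ T₂.Adj p.2 q.2 := by
  simp only [joinCopies, SimpleGraph.fromRel_adj, ne_eq, Sum.inr.injEq, T₂.adj_comm q.2 p.2,
    eq_comm (a := q.1), or_self]
  exact ⟨And.right, fun h => ⟨fun hpq => h.2.ne (congrArg Prod.snd hpq), h⟩⟩

end joinCopies

theorem adjMatrix_joinCopies {V₁ V₂ : Type*} [DecidableEq V₁] [DecidableEq V₂]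
    (T₁ : SimpleGraph V₁) (T₂ : SimpleGraph V₂) [DecidableRel T₁.Adj] [DecidableRel T₂.Adj]
    (v₁ : V₁) (v₂ : V₂) (k : ℕ) [DecidableRel (joinCopies T₁ T₂ v₁ v₂ k).Adj]
    (R : Type*) [Semiring R] :
    (joinCopies T₁ T₂ v₁ v₂ k).adjMatrix R =
      fromBlocks (T₁.adjMatrix R)
        (vecMulVec (Pi.single v₁ 1) fun p : Fin k × V₂ => (Pi.single v₂ 1 : V₂ → R) p.2)
        (vecMulVec (fun p : Fin k × V₂ => (Pi.single v₂ 1 : V₂ → R) p.2) (Pi.single v₁ 1))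
        ((1 : Matrix (Fin k) (Fin k) R) ⊗ₖ T₂.adjMatrix R) := by
  ext (a | ⟨i, a⟩) (b | ⟨j, b⟩)
  all_goals simp only [SimpleGraph.adjMatrix_apply, joinCopies_adj_inl_inl,
    joinCopies_adj_inl_inr, joinCopies_adj_inr_inl, joinCopies_adj_inr_inr, fromBlocks_apply₁₁,
    fromBlocks_apply₁₂, fromBlocks_apply₂₁, fromBlocks_apply₂₂, vecMulVec_apply, Pi.single_apply,
    kroneckerMap_apply, one_apply]
  all_goals split_ifs <;> simp_all

theorem map_charmatrix_adjMatrix_joinCopies {V₁ V₂ : Type*} [Fintype V₁] [Fintype V₂]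
    [DecidableEq V₁] [DecidableEq V₂] (T₁ : SimpleGraph V₁) (T₂ : SimpleGraph V₂)
    [DecidableRel T₁.Adj] [DecidableRel T₂.Adj] (v₁ : V₁) (v₂ : V₂) (k : ℕ)
    [DecidableRel (joinCopies T₁ T₂ v₁ v₂ k).Adj] {R S : Type*} [CommRing R] [CommRing S]
    (f : R[X] →+* S) :
    (charmatrix ((joinCopies T₁ T₂ v₁ v₂ k).adjMatrix R)).map f =
      fromBlocks ((charmatrix (T₁.adjMatrix R)).map f)
        (-vecMulVec (Pi.single v₁ 1) fun p : Fin k × V₂ => (Pi.single v₂ 1 : V₂ → S) p.2)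
        (-vecMulVec (fun p : Fin k × V₂ => (Pi.single v₂ 1 : V₂ → S) p.2) (Pi.single v₁ 1))
        ((1 : Matrix (Fin k) (Fin k) S) ⊗ₖ (charmatrix (T₂.adjMatrix R)).map f) := by
  rw [adjMatrix_joinCopies, charmatrix_fromBlocks, charmatrix_one_kronecker, fromBlocks_map]
  congr 1
  all_goals ext
  all_goals
    simp [vecMulVec_apply, Pi.single_apply, one_apply, apply_ite f, apply_ite Polynomial.C]

theorem stmt14_general {V₁ V₂ : Type*} [Fintype V₁] [Fintype V₂]
    (T₁ : SimpleGraph V₁) (T₂ : SimpleGraph V₂)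
    (v₁ : V₁) (v₂ : V₂) (k : ℕ) (hk : 1 ≤ k) :
    gCharpoly (joinCopies T₁ T₂ v₁ v₂ k) =
      (gCharpoly T₂) ^ (k - 1) *
        (gCharpoly T₁ * gCharpoly T₂ -
          (k : Polynomial ℝ) * gCharpoly (T₁.induce {x | x ≠ v₁}) *
            gCharpoly (T₂.induce {x | x ≠ v₂})) := by
  classical
  have : Nonempty (Fin k) := ⟨⟨0, hk⟩⟩
  apply IsFractionRing.injective ℝ[X] (FractionRing ℝ[X])
  set f := algebraMap ℝ[X] (FractionRing ℝ[X])
  have hN₂ : ((charmatrix (T₂.adjMatrix ℝ)).map f).det ≠ 0 := by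
    rw [← RingHom.mapMatrix_apply, ← RingHom.map_det,
      map_ne_zero_iff f (IsFractionRing.injective _ _)]
    exact (charpoly_monic _).ne_zero
  rw [gCharpoly_induce, gCharpoly_induce]
  simp only [gCharpoly_eq_det_charmatrix, map_mul, map_sub, map_pow, map_natCast,
    RingHom.map_det, RingHom.mapMatrix_apply]
  rw [map_charmatrix_adjMatrix_joinCopies, det_fromBlocks_one_kronecker _ _ hN₂, Fintype.card_fin]
  simp only [submatrix_map]

theorem stmt14 {V₁ V₂ : Type*} [Fintype V₁] [Fintype V₂]
    (T₁ : SimpleGraph V₁) (T₂ : SimpleGraph V₂) (hT₁ : T₁.IsTree) (hT₂ : T₂.IsTree)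
    (v₁ : V₁) (v₂ : V₂) (k : ℕ) (hk : 1 ≤ k) :
    gCharpoly (joinCopies T₁ T₂ v₁ v₂ k) =
      (gCharpoly T₂) ^ (k - 1) *
        (gCharpoly T₁ * gCharpoly T₂ -
          (k : Polynomial ℝ) * gCharpoly (T₁.induce {x | x ≠ v₁}) *
            gCharpoly (T₂.induce {x | x ≠ v₂})) :=
  stmt14_general T₁ T₂ v₁ v₂ k hk
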